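/- For every integer n ≥ 1, b(n) > a(n); that is, the difference sequence b − a is positive. -/

import Mathlib

/-- `a n` is the `n`-th positive integer `k` (1-indexed, in increasing order) such that
the fractional part `{k·√2}` is less than `1/2`. -/
noncomputable def a (n : ℕ) : ℕ :=
  Nat.nth (fun k => 0 < k ∧ Int.fract ((k : ℝ) * Real.sqrt 2) < 1 / 2) (n - 1)

/-- `b n` is the `n`-th positive integer `k` (1-indexed, in increasing order) such that
the fractional part `{k·√2}` is at least `1/2`. -/
noncomputable def b (n : ℕ) : ℕ :=
  Nat.nth (fun k => 0 < k ∧ 1 / 2 ≤ Int.fract ((k : ℝ) * Real.sqrt 2)) (n - 1)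

/-! Let `s k = ±1` according as `{k√2} < 1/2` or not. The sequence `s` is self-similar: for
`K k = 3k + 2⌊k√2⌋` one has `(K k + i)√2 ≡ (3 - 2√2){k√2} + i(√2 - 1) (mod 1)`, so the block
`s (K k), …, s (K (k+1) - 1)` is `AABAB`, `ABBAB` or `ABBABAB` (`A = +1`, `B = -1`) according to
where `{k√2}` lies, and its sum is `s k`. Hence the partial sums `D N = ∑_{k<N} s k` satisfy
`D (K k) = D k`, and inside the `k`-th block they never drop below `D (k+1)`; by strong induction
`D N ≥ 1` for `N ≥ 1`. So every initial segment of ℕ holds at least as many indices of `a` as of `b`,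
which forces `a n < b n`. -/

open Finset

lemma Nat.nth_lt_nth_of_count_le {p q : ℕ → Prop} [DecidablePred p] [DecidablePred q]
    (hq : (Set.ofPred q).Infinite) (hdisj : ∀ k, q k → ¬ p k) (hcount : ∀ N, count q N ≤ count p N)
    (i : ℕ) : nth p i < nth q i := by
  have hqi : q (nth q i) := nth_mem_of_infinite hq i
  apply nth_lt_of_lt_count
  have h := hcount (nth q i + 1)
  rw [count_succ, count_succ, count_nth_of_infinite hq, if_pos hqi, if_neg (hdisj _ hqi)] at h
  omega

lemma natCast_floor_add_fract {R : Type*} [Ring R] [LinearOrder R] [FloorRing R] {x : R}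
    (hx : 0 ≤ x) : (⌊x⌋₊ : R) + Int.fract x = x := by
  rw [natCast_floor_eq_intCast_floor hx, Int.floor_add_fract]

namespace FractSqrtTwo

lemma seven_fifths_lt_sqrt_two : (7 / 5 : ℝ) < √2 := by
  rw [Real.lt_sqrt (by norm_num)]; norm_num

lemma sqrt_two_lt_three_halves : √2 < 3 / 2 := by
  rw [Real.sqrt_lt' (by norm_num)]; norm_num

noncomputable def sgn (k : ℕ) : ℤ := if Int.fract (k * √2) < 1 / 2 then 1 else -1

noncomputable def disc (N : ℕ) : ℤ := ∑ k ∈ range N, sgn k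

lemma sgn_eq_one {k n : ℕ} {t : ℝ} (h : k * √2 = n + t) (h0 : 0 ≤ t) (h1 : t < 1 / 2) :
    sgn k = 1 := by
  have : Int.fract (k * √2 : ℝ) = t := Int.fract_eq_iff.2 ⟨h0, by linarith, n, by rw [h]; simp⟩
  rw [sgn, this, if_pos h1]

lemma sgn_eq_neg_one {k n : ℕ} {t : ℝ} (h : k * √2 = n + t) (h0 : 1 / 2 ≤ t) (h1 : t < 1) :
    sgn k = -1 := by
  have : Int.fract (k * √2 : ℝ) = t := Int.fract_eq_iff.2 ⟨by linarith, h1, n, by rw [h]; simp⟩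
  rw [sgn, this, if_neg (not_lt.2 h0)]

noncomputable def blockStart (k : ℕ) : ℕ := 3 * k + 2 * ⌊k * √2⌋₊

lemma blockStart_add_mul_sqrt_two (k i c : ℕ) :
    ((blockStart k + i : ℕ) : ℝ) * √2 = ((4 * k + 3 * ⌊k * √2⌋₊ + i + c : ℕ) : ℝ) +
      ((3 - 2 * √2) * Int.fract (k * √2) + i * (√2 - 1) - c) := by
  have hfloor := natCast_floor_add_fract (by positivity : (0 : ℝ) ≤ k * √2)
  have hsq : √2 * √2 = 2 := Real.mul_self_sqrt (by norm_num)
  simp only [blockStart]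
  push_cast
  linear_combination (2 * √2 - 3) * hfloor + 2 * (k : ℝ) * hsq

noncomputable def blockWord (k : ℕ) : List ℤ :=
  if Int.fract (k * √2) < 1 / 2 then [1, 1, -1, 1, -1]
  else if Int.fract (k * √2) < 2 - √2 then [1, -1, -1, 1, -1]
  else [1, -1, -1, 1, -1, 1, -1]

lemma sgn_blockStart_add_two (k : ℕ) : sgn (blockStart k + 2) = -1 := by
  have := Int.fract_nonneg (k * √2 : ℝ)
  have := Int.fract_lt_one (k * √2 : ℝ)
  have := seven_fifths_lt_sqrt_two
  have := sqrt_two_lt_three_halves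
  exact sgn_eq_neg_one (blockStart_add_mul_sqrt_two k 2 0) (by push_cast; nlinarith)
    (by push_cast; nlinarith)

lemma sgn_blockStart_add (k : ℕ) {i : ℕ} (hi : i < (blockWord k).length) :
    sgn (blockStart k + i) = (blockWord k)[i] := by
  set θ := Int.fract (k * √2 : ℝ) with hθ
  have hθ0 : 0 ≤ θ := Int.fract_nonneg _
  have hθ1 : θ < 1 := Int.fract_lt_one _
  have := seven_fifths_lt_sqrt_two
  have := sqrt_two_lt_three_halves
  have hδθ : (3 - 2 * √2) * θ < 3 - 2 * √2 := by nlinarith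
  have key := blockStart_add_mul_sqrt_two k
  have h0 : sgn (blockStart k + 0) = 1 :=
    sgn_eq_one (key 0 0) (by push_cast; nlinarith) (by push_cast; nlinarith)
  have h2 := sgn_blockStart_add_two k
  have h3 : sgn (blockStart k + 3) = 1 :=
    sgn_eq_one (key 3 1) (by push_cast; nlinarith) (by push_cast; nlinarith)
  have h4 : sgn (blockStart k + 4) = -1 :=
    sgn_eq_neg_one (key 4 1) (by push_cast; nlinarith) (by push_cast; nlinarith)
  simp only [blockWord, ← hθ] at hi ⊢
  split_ifs at hi ⊢ with hhalf hshort <;> simp only [List.length_cons, List.length_nil] at hi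
  · have h1 : sgn (blockStart k + 1) = 1 :=
      sgn_eq_one (key 1 0) (by push_cast; nlinarith) (by push_cast; nlinarith)
    interval_cases i <;> assumption
  · have h1 : sgn (blockStart k + 1) = -1 :=
      sgn_eq_neg_one (key 1 0) (by push_cast; nlinarith) (by push_cast; nlinarith)
    interval_cases i <;> assumption
  · have h1 : sgn (blockStart k + 1) = -1 :=
      sgn_eq_neg_one (key 1 0) (by push_cast; nlinarith) (by push_cast; nlinarith)
    have h5 : sgn (blockStart k + 5) = 1 :=
      sgn_eq_one (key 5 2) (by push_cast; nlinarith) (by push_cast; nlinarith)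
    have h6 : sgn (blockStart k + 6) = -1 :=
      sgn_eq_neg_one (key 6 2) (by push_cast; nlinarith) (by push_cast; nlinarith)
    interval_cases i <;> assumption

lemma blockStart_succ (k : ℕ) : blockStart (k + 1) = blockStart k + (blockWord k).length := by
  set θ := Int.fract (k * √2 : ℝ) with hθ
  have hθ0 : 0 ≤ θ := Int.fract_nonneg _
  have hθ1 : θ < 1 := Int.fract_lt_one _
  have := seven_fifths_lt_sqrt_two
  have := sqrt_two_lt_three_halves
  have hfloor := natCast_floor_add_fract (by positivity : (0 : ℝ) ≤ k * √2)
  have hsucc : ((k + 1 : ℕ) : ℝ) * √2 = ⌊(k : ℝ) * √2⌋₊ + (θ + √2) := by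
    push_cast; linarith
  have floor_succ (m : ℕ) (hm : m ≤ θ + √2) (hm' : θ + √2 < m + 1) :
      ⌊((k + 1 : ℕ) : ℝ) * √2⌋₊ = ⌊(k : ℝ) * √2⌋₊ + m := by
    rw [Nat.floor_eq_iff (by positivity), hsucc]
    push_cast
    constructor <;> linarith
  simp only [blockWord, ← hθ, blockStart]
  split_ifs with hhalf hshort
  · rw [floor_succ 1 (by push_cast; linarith) (by push_cast; linarith)]
    simp only [List.length_cons, List.length_nil]; ring
  · rw [floor_succ 1 (by push_cast; linarith) (by push_cast; linarith)]
    simp only [List.length_cons, List.length_nil]; ring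
  · rw [floor_succ 2 (by push_cast; linarith) (by push_cast; linarith)]
    simp only [List.length_cons, List.length_nil]; ring

lemma disc_succ (N : ℕ) : disc (N + 1) = disc N + sgn N := sum_range_succ _ _

lemma disc_blockStart_add (k : ℕ) {j : ℕ} (hj : j ≤ (blockWord k).length) :
    disc (blockStart k + j) = disc (blockStart k) + ((blockWord k).take j).sum := by
  induction j with
  | zero => simp
  | succ j ih =>
    rw [← add_assoc, disc_succ, ih (by omega), sgn_blockStart_add k (by omega),
      List.sum_take_succ _ _ (by omega), add_assoc]

lemma sum_blockWord (k : ℕ) : (blockWord k).sum = sgn k := by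
  unfold blockWord sgn
  split_ifs <;> rfl

lemma sgn_le_sum_take_blockWord (k : ℕ) {j : ℕ} (hj0 : 0 < j) (hj : j ≤ (blockWord k).length) :
    sgn k ≤ ((blockWord k).take j).sum := by
  unfold blockWord sgn at *
  split_ifs at * <;> simp only [List.length_cons, List.length_nil] at hj <;>
    interval_cases j <;> decide

lemma disc_blockStart (k : ℕ) : disc (blockStart k) = disc k := by
  induction k with
  | zero => simp [blockStart, disc]
  | succ k ih =>
    rw [blockStart_succ, disc_blockStart_add k le_rfl, List.take_length, sum_blockWord, ih,
      disc_succ]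

lemma disc_succ_le_disc {k N : ℕ} (hN : blockStart k < N) (hN' : N ≤ blockStart (k + 1)) :
    disc (k + 1) ≤ disc N := by
  rw [blockStart_succ] at hN'
  obtain ⟨j, rfl⟩ := Nat.exists_eq_add_of_lt hN
  rw [add_assoc, disc_blockStart_add k (by omega), disc_blockStart, disc_succ]
  have := sgn_le_sum_take_blockWord k (j := j + 1) (by omega) (by omega)
  omega

lemma exists_blockStart_lt_le {N : ℕ} (hN : 0 < N) :
    ∃ k, blockStart k < N ∧ N ≤ blockStart (k + 1) := by
  classical
  have hex : ∃ k, N ≤ blockStart (k + 1) := ⟨N, by unfold blockStart; omega⟩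
  refine ⟨Nat.find hex, ?_, Nat.find_spec hex⟩
  rcases h : Nat.find hex with _ | k
  · simpa [blockStart] using hN
  · exact not_le.1 (Nat.find_min hex (by omega))

lemma one_le_disc {N : ℕ} (hN : 0 < N) : 1 ≤ disc N := by
  induction N using Nat.strong_induction_on with
  | _ N ih =>
  obtain ⟨k, hk, hk'⟩ := exists_blockStart_lt_le hN
  refine le_trans ?_ (disc_succ_le_disc hk hk')
  rcases k with _ | k
  · simp [disc, sgn]
  · exact ih (k + 2) (by unfold blockStart at hk; omega) (by omega)

def LowerHalf (k : ℕ) : Prop := 0 < k ∧ Int.fract ((k : ℝ) * √2) < 1 / 2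

def UpperHalf (k : ℕ) : Prop := 0 < k ∧ 1 / 2 ≤ Int.fract ((k : ℝ) * √2)

lemma upperHalf_iff {k : ℕ} (hk : 0 < k) : UpperHalf k ↔ sgn k = -1 := by
  simp [UpperHalf, sgn, hk]

lemma infinite_upperHalf : (Set.ofPred UpperHalf).Infinite := by
  refine Set.infinite_of_forall_exists_gt fun m => ⟨blockStart m + 2, ?_, ?_⟩
  · exact (upperHalf_iff (by omega)).2 (sgn_blockStart_add_two m)
  · unfold blockStart; omega

open scoped Classical in
lemma sgn_eq_ite_sub_ite {k : ℕ} (hk : 0 < k) :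
    sgn k = (if LowerHalf k then 1 else 0) - (if UpperHalf k then 1 else 0) := by
  unfold sgn LowerHalf UpperHalf
  by_cases h : Int.fract ((k : ℝ) * √2) < 1 / 2
  · rw [if_pos h, if_pos ⟨hk, h⟩, if_neg fun hu => not_le.2 h hu.2]; rfl
  · rw [if_neg h, if_neg fun hl => h hl.2, if_pos ⟨hk, not_lt.1 h⟩]; rfl

open scoped Classical in
lemma count_sub_count_add_one {N : ℕ} (hN : 0 < N) :
    (Nat.count LowerHalf N : ℤ) - Nat.count UpperHalf N + 1 = disc N := by
  induction N, hN using Nat.le_induction with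
  | base => simp [Nat.count_succ, LowerHalf, UpperHalf, disc, sgn]
  | succ N hN ih =>
    rw [Nat.count_succ, Nat.count_succ, disc_succ, ← ih, sgn_eq_ite_sub_ite hN]
    push_cast
    ring

open scoped Classical in
lemma count_upperHalf_le (N : ℕ) : Nat.count UpperHalf N ≤ Nat.count LowerHalf N := by
  rcases N.eq_zero_or_pos with rfl | hN
  · simp
  · have := count_sub_count_add_one hN
    have := one_le_disc hN
    omega

end FractSqrtTwo

open FractSqrtTwo in
theorem stmt_1 (n : ℕ) : a n < b n := by
  classical
  exact Nat.nth_lt_nth_of_count_le infinite_upperHalf (fun _ hb ha => (not_lt.2 hb.2) ha.2)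
    count_upperHalf_le (n - 1)
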